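/- The point x⁰ is a non-wandering point of the shift σ on X₀: for every open set U of {0,1}^ℤ containing x⁰ and every N ∈ ℕ, there exist an integer n > N and a point y ∈ U ∩ X₀ such that σ^n y ∈ U ∩ X₀. -/

import Mathlib

/-- The left shift on `{0,1}^ℤ`: `(σ x)(i) = x(i+1)`. -/
def shiftMap (x : ℤ → Bool) : ℤ → Bool := fun i => x (i + 1)

/-- `x` contains the forbidden word `1 0^m 1^n 0` at position `i` (for `m, n ≥ 1`). -/
def ContainsForbidden (x : ℤ → Bool) (i m n : ℤ) : Prop :=
  x i = true ∧ (∀ j : ℤ, 1 ≤ j → j ≤ m → x (i + j) = false) ∧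
    (∀ j : ℤ, 1 ≤ j → j ≤ n → x (i + m + j) = true) ∧ x (i + m + n + 1) = false

/-- The subshift `X₀`: points containing no forbidden word `1 0^m 1^n 0`, `m, n ≥ 1`. -/
def X0 : Set (ℤ → Bool) :=
  {x | ∀ i m n : ℤ, 1 ≤ m → 1 ≤ n → ¬ ContainsForbidden x i m n}

/-- The point `x⁰ = ⋯000.111⋯`. -/
def xZero : ℤ → Bool := fun i => decide (0 ≤ i)

/-!
An open set around `x⁰` contains every point agreeing with `x⁰` on a window `[-K, K]`. The
point `0^∞.1^(n-K) 0^K 1^∞` with `n > 2K` and its `n`-th shift `⋯0 1^(n-K) 0^K.1^∞` both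
agree with `x⁰` there, and the point lies in `X₀` because its only block `1 0^K 1⋯` is
followed by ones forever, so the closing `0` of a forbidden word never occurs.
-/

lemma IsOpen.exists_window_of_mem {α : Type*} [TopologicalSpace α] {U : Set (ℤ → α)}
    {x : ℤ → α} (hU : IsOpen U) (hx : x ∈ U) :
    ∃ K : ℕ, ∀ y : ℤ → α, (∀ i : ℤ, i.natAbs ≤ K → y i = x i) → y ∈ U := by
  obtain ⟨I, u, hu, hIu⟩ := isOpen_pi_iff.mp hU x hx
  refine ⟨I.sup Int.natAbs, fun y hy => hIu fun i hi => ?_⟩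
  rw [hy i (Finset.le_sup hi)]
  exact (hu i hi).2

lemma shiftMap_iterate_apply (n : ℕ) (x : ℤ → Bool) (i : ℤ) :
    shiftMap^[n] x i = x (i + n) := by
  induction n generalizing x with
  | zero => simp
  | succ k ih =>
    rw [Function.iterate_succ_apply, ih]
    simp only [shiftMap]
    congr 1
    push_cast
    ring

lemma shiftMap_mapsTo_X0 : Set.MapsTo shiftMap X0 X0 := by
  intro x hx i m n hm hn ⟨h₁, h₂, h₃, h₄⟩
  refine hx (i + 1) m n hm hn ⟨h₁, fun j hj hjm => ?_, fun j hj hjn => ?_, ?_⟩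
  · simpa only [shiftMap, add_right_comm] using h₂ j hj hjm
  · simpa only [shiftMap, add_right_comm] using h₃ j hj hjn
  · simpa only [shiftMap, add_right_comm] using h₄

/-- The point `0^∞.1^(n-K) 0^K 1^∞`. -/
def returnPoint (K n : ℕ) : ℤ → Bool := fun i => decide ((0 ≤ i ∧ i < (n : ℤ) - K) ∨ n ≤ i)

lemma returnPoint_mem_X0 (K n : ℕ) : returnPoint K n ∈ X0 := by
  intro i m l hm hl ⟨h₁, h₂, h₃, h₄⟩
  have h₂' := h₂ 1 le_rfl hm
  have h₃' := h₃ l hl le_rfl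
  simp only [returnPoint, decide_eq_true_eq, decide_eq_false_iff_not] at h₁ h₂' h₃' h₄
  omega

lemma returnPoint_apply_eq_xZero {K n : ℕ} (hn : 2 * K < n) {i : ℤ} (hi : i.natAbs ≤ K) :
    returnPoint K n i = xZero i := by
  simp only [returnPoint, xZero, decide_eq_decide]
  omega

lemma shiftMap_iterate_returnPoint_apply_eq_xZero {K n : ℕ} {i : ℤ} (hi : i.natAbs ≤ K) :
    shiftMap^[n] (returnPoint K n) i = xZero i := by
  simp only [shiftMap_iterate_apply, returnPoint, xZero, decide_eq_decide]
  omega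

/-- `x⁰` is a non-wandering point of the shift on `X₀`. -/
theorem xZero_nonwandering :
    ∀ U : Set (ℤ → Bool), IsOpen U → xZero ∈ U → ∀ N : ℕ,
      ∃ n : ℕ, N < n ∧ ∃ y ∈ U ∩ X0, shiftMap^[n] y ∈ U ∩ X0 := by
  intro U hU hx N
  obtain ⟨K, hK⟩ := hU.exists_window_of_mem hx
  have hn : 2 * K < 2 * K + N + 1 := by omega
  have hy : returnPoint K (2 * K + N + 1) ∈ X0 := returnPoint_mem_X0 _ _
  refine ⟨2 * K + N + 1, by omega, returnPoint K (2 * K + N + 1), ⟨?_, hy⟩, ?_,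
    shiftMap_mapsTo_X0.iterate _ hy⟩
  · exact hK _ fun i hi => returnPoint_apply_eq_xZero hn hi
  · exact hK _ fun i hi => shiftMap_iterate_returnPoint_apply_eq_xZero hi
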